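/- For N ≥ 1, the N×N matrix S^{IV} with entries S^{IV}_{kn} = √(2/N) sin((π/N)(n + 1/2)(k + 1/2)), k,n = 0,…,N−1, is orthogonal: (S^{IV})ᵀ S^{IV} = I. -/

import Mathlib

/-!
Writing `2 sin a sin b = cos (a - b) - cos (a + b)`, an entry of `SᵀS` becomes a difference of two
sums `∑_{r<N} cos (π m (r + 1/2) / N)` with `m = j - k` and `m = j + k + 1`, both in `(-2N, 2N)`.
Multiplying such a sum by `2 sin (π m / 2N)` telescopes to `sin (π m) = 0`, and for `0 < |m| < 2N`
that factor is nonzero, so only the diagonal term `m = j - k = 0` survives, with value `N`.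
-/

open Real Finset

theorem two_mul_sin_half_mul_sum_range_cos (θ : ℝ) (N : ℕ) :
    2 * sin (θ / 2) * ∑ r ∈ range N, cos (θ * (r + 1 / 2)) = sin (θ * N) := by
  have hstep : ∀ r : ℕ, 2 * sin (θ / 2) * cos (θ * (r + 1 / 2)) =
      sin (θ * (r + 1 : ℕ)) - sin (θ * r) := by
    intro r
    rw [two_mul_sin_mul_cos, show θ / 2 - θ * (r + 1 / 2) = -(θ * r) by ring, sin_neg]
    push_cast
    ring_nf
  rw [mul_sum, sum_congr rfl fun r _ => hstep r, sum_range_sub (fun r : ℕ => sin (θ * r))]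
  simp

theorem sum_range_cos_pi_mul_div_add_half (N : ℕ) {m : ℤ} (hm : |m| < 2 * N) :
    ∑ r ∈ range N, cos (π * m / N * (r + 1 / 2)) = if m = 0 then (N : ℝ) else 0 := by
  split_ifs with h0
  · simp [h0]
  have hN : (N : ℝ) ≠ 0 := by
    have : 0 < N := by have := abs_nonneg m; omega
    positivity
  have hsin_half : sin (π * m / N / 2) ≠ 0 := by
    rw [Ne, sin_eq_zero_iff]
    rintro ⟨n, hn⟩
    have hmn : m = 2 * (N : ℤ) * n := by
      field_simp at hn
      have : (m : ℝ) = 2 * N * n := by linarith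
      exact_mod_cast this
    rcases eq_or_ne n 0 with rfl | hn0
    · simp_all
    · have : 2 * (N : ℤ) ≤ |m| := by
        rw [hmn, abs_mul, abs_of_nonneg (by positivity)]
        exact le_mul_of_one_le_right (by positivity) (Int.one_le_abs hn0)
      omega
  have hsin_N : sin (π * m / N * N) = 0 := by
    rw [div_mul_cancel₀ _ hN, mul_comm, sin_int_mul_pi]
  have := two_mul_sin_half_mul_sum_range_cos (π * m / N) N
  rw [hsin_N] at this
  simpa [hsin_half] using this

theorem sum_sin_mul_sin_pi_div_add_half (N : ℕ) (j k : Fin N) :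
    ∑ r : Fin N, sin (π / N * (j + 1 / 2) * (r + 1 / 2)) * sin (π / N * (k + 1 / 2) * (r + 1 / 2))
      = if j = k then (N : ℝ) / 2 else 0 := by
  have hprod : ∀ r : ℕ,
      sin (π / N * (j + 1 / 2) * (r + 1 / 2)) * sin (π / N * (k + 1 / 2) * (r + 1 / 2)) =
        (cos (π * ((j - k : ℤ) : ℝ) / N * (r + 1 / 2))
          - cos (π * ((j + k + 1 : ℤ) : ℝ) / N * (r + 1 / 2))) / 2 := by
    intro r
    rw [eq_div_iff two_ne_zero, mul_comm, ← mul_assoc, two_mul_sin_mul_sin]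
    push_cast
    ring_nf
  have hj := j.isLt
  have hk := k.isLt
  rw [Fin.sum_univ_eq_sum_range (fun r : ℕ => sin (π / N * (j + 1 / 2) * (r + 1 / 2)) *
      sin (π / N * (k + 1 / 2) * (r + 1 / 2))), sum_congr rfl fun r _ => hprod r, ← sum_div,
    sum_sub_distrib, sum_range_cos_pi_mul_div_add_half N (by rw [abs_lt]; omega),
    sum_range_cos_pi_mul_div_add_half N (by rw [abs_lt]; omega)]
  have hsum_ne : ((j : ℕ) : ℤ) + (k : ℕ) + 1 ≠ 0 := by omega
  simp [sub_eq_zero, Fin.ext_iff, hsum_ne, ite_div]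

theorem stmt17_general (N : ℕ) :
    let S : Matrix (Fin N) (Fin N) ℝ := fun k n =>
      Real.sqrt (2 / N) * Real.sin (π / N * ((n : ℝ) + 1/2) * ((k : ℝ) + 1/2))
    S.transpose * S = 1 := by
  intro S
  ext j k
  have hN : (0 : ℝ) < N := by exact_mod_cast j.pos
  have hsqrt : √(2 / N) * √(2 / N) = 2 / N := Real.mul_self_sqrt (by positivity)
  calc (S.transpose * S) j k
      = 2 / N * ∑ r : Fin N, sin (π / N * (j + 1 / 2) * (r + 1 / 2)) *
          sin (π / N * (k + 1 / 2) * (r + 1 / 2)) := by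
        rw [Matrix.mul_apply, mul_sum]
        refine sum_congr rfl fun r _ => ?_
        show √(2 / N) * sin (π / N * (j + 1 / 2) * (r + 1 / 2)) *
            (√(2 / N) * sin (π / N * (k + 1 / 2) * (r + 1 / 2))) = _
        rw [mul_mul_mul_comm, hsqrt]
    _ = (1 : Matrix (Fin N) (Fin N) ℝ) j k := by
        rw [sum_sin_mul_sin_pi_div_add_half, Matrix.one_apply, mul_ite, mul_zero, div_mul_div_cancel₀ hN.ne', div_self two_ne_zero]

/-- The type-IV Discrete Sine Transform matrix is orthogonal. -/
theorem stmt17 (N : ℕ) (hN : 1 ≤ N) :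
    let S : Matrix (Fin N) (Fin N) ℝ := fun k n =>
      Real.sqrt (2 / N) * Real.sin (π / N * ((n : ℝ) + 1/2) * ((k : ℝ) + 1/2))
    S.transpose * S = 1 :=
  stmt17_general N
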